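/- arXiv:1802.03443 — 8 statements merged into one kernel-verified Lean document; each statement's English description precedes it below -/
import Mathlib

section
/- The n-th Motzkin number M_n = Σ_{k=0}^{⌊n/2⌋} binom(n,2k)·C_k equals the coefficient of x^n in (1/x)·Rev(x/(1+x+x^2)), where Rev denotes compositional inversion of formal power series and C_k is the k-th Catalan number. -/
/-!
Write `r = X * m`. Then `m = 1 + X m + X² m²`, so the coefficients of `m` are determined by
`m₀ = m₁ = 1` and `m_{n+2} = m_{n+1} + ∑_{i+j=n} m_i m_j`. The sums `M_n = ∑_k C(n,2k) C_k`
satisfy the same recurrence: Pascal's rule splits `M_{n+2}` into `M_{n+1}` and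
`∑_k C(n+1,2k+1) C_{k+1}`, and expanding `C_{k+1} = ∑_{a+b=k} C_a C_b` together with the upper
Vandermonde identity `∑_{i+j=n} C(i,p) C(j,q) = C(n+1,p+q+1)` turns the latter into
`∑_{i+j=n} M_i M_j`.
-/

open PowerSeries Finset

theorem Nat.sum_antidiagonal_choose_mul_choose (p q n : ℕ) :
    ∑ ij ∈ antidiagonal n, ij.1.choose p * ij.2.choose q = (n + 1).choose (p + q + 1) := by
  induction n generalizing q with
  | zero => rcases p with _ | p <;> rcases q with _ | q <;> simp [choose_succ_succ', ← add_assoc]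
  | succ n ih =>
    rw [Finset.Nat.sum_antidiagonal_succ']
    rcases q with _ | q
    · simpa only [choose_zero_right, mul_one, ← choose_succ_succ', add_comm] using
        congrArg ((n + 1).choose p + ·) (ih 0)
    · simp only [choose_succ_succ' _ q, mul_add, sum_add_distrib, ih, choose_zero_succ, mul_zero,
        zero_add]
      rw [choose_succ_succ' (n + 1), add_assoc p q 1]

theorem Finset.sum_range_sum_antidiagonal {M : Type*} [AddCommMonoid M] (N : ℕ)
    (g : ℕ → ℕ → M) (hg : ∀ a b, N ≤ a + b → g a b = 0) :
    ∑ k ∈ range N, ∑ ij ∈ antidiagonal k, g ij.1 ij.2 = ∑ a ∈ range N, ∑ b ∈ range N, g a b := by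
  simp only [Finset.Nat.sum_antidiagonal_eq_sum_range_succ g, sum_range_diag_flip]
  refine sum_congr rfl fun a _ => sum_subset (range_subset_range.2 (Nat.sub_le N a)) ?_
  intro b _ hb
  exact hg a b (by rw [mem_range] at hb; omega)

def motzkin (n : ℕ) : ℕ := ∑ k ∈ range (n / 2 + 1), n.choose (2 * k) * catalan k

theorem motzkin_eq_sum_range {n N : ℕ} (h : n / 2 < N) :
    motzkin n = ∑ k ∈ range N, n.choose (2 * k) * catalan k := by
  refine sum_subset (range_subset_range.2 h) fun k _ hk => ?_
  rw [Nat.choose_eq_zero_of_lt (by rw [mem_range] at hk; omega), zero_mul]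

theorem motzkin_zero : motzkin 0 = 1 := by simp [motzkin]

theorem motzkin_one : motzkin 1 = 1 := by simp [motzkin]

theorem motzkin_add_two_eq_add_sum_choose_mul_catalan (n : ℕ) :
    motzkin (n + 2) = motzkin (n + 1) +
      ∑ k ∈ range (n + 1), (n + 1).choose (2 * k + 1) * catalan (k + 1) := by
  rw [motzkin_eq_sum_range (N := n + 2) (by omega), motzkin_eq_sum_range (N := n + 2) (by omega),
    sum_range_succ' _ (n + 1), sum_range_succ' _ (n + 1)]
  have pascal : ∀ k, (n + 2).choose (2 * (k + 1))
      = (n + 1).choose (2 * k + 1) + (n + 1).choose (2 * (k + 1)) :=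
    fun k => Nat.choose_succ_succ' (n + 1) (2 * k + 1)
  simp only [pascal, add_mul, sum_add_distrib, mul_zero, Nat.choose_zero_right]
  ring

theorem sum_antidiagonal_motzkin_mul_motzkin (n : ℕ) :
    ∑ ij ∈ antidiagonal n, motzkin ij.1 * motzkin ij.2 =
      ∑ k ∈ range (n + 1), (n + 1).choose (2 * k + 1) * catalan (k + 1) := by
  calc ∑ ij ∈ antidiagonal n, motzkin ij.1 * motzkin ij.2
      = ∑ ij ∈ antidiagonal n, ∑ a ∈ range (n + 1), ∑ b ∈ range (n + 1),
          ij.1.choose (2 * a) * ij.2.choose (2 * b) * (catalan a * catalan b) := by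
        refine sum_congr rfl fun ij hij => ?_
        have := mem_antidiagonal.1 hij
        rw [motzkin_eq_sum_range (N := n + 1) (by omega),
          motzkin_eq_sum_range (N := n + 1) (by omega), sum_mul_sum]
        exact sum_congr rfl fun a _ => sum_congr rfl fun b _ => by ring
    _ = ∑ a ∈ range (n + 1), ∑ b ∈ range (n + 1),
          (n + 1).choose (2 * a + 2 * b + 1) * (catalan a * catalan b) := by
        rw [sum_comm]
        refine sum_congr rfl fun a _ => ?_
        rw [sum_comm]
        simp only [← sum_mul, Nat.sum_antidiagonal_choose_mul_choose]
    _ = ∑ k ∈ range (n + 1), ∑ ab ∈ antidiagonal k,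
          (n + 1).choose (2 * ab.1 + 2 * ab.2 + 1) * (catalan ab.1 * catalan ab.2) := by
        refine (sum_range_sum_antidiagonal _ _ fun a b hab => ?_).symm
        rw [Nat.choose_eq_zero_of_lt (by omega), zero_mul]
    _ = ∑ k ∈ range (n + 1), (n + 1).choose (2 * k + 1) * catalan (k + 1) := by
        refine sum_congr rfl fun k _ => ?_
        rw [catalan_succ', mul_sum]
        refine sum_congr rfl fun ab hab => ?_
        rw [← (mem_antidiagonal.1 hab), mul_add]

theorem motzkin_add_two (n : ℕ) :
    motzkin (n + 2) = motzkin (n + 1) + ∑ ij ∈ antidiagonal n, motzkin ij.1 * motzkin ij.2 := by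
  rw [motzkin_add_two_eq_add_sum_choose_mul_catalan, sum_antidiagonal_motzkin_mul_motzkin]

namespace PowerSeries

variable {R : Type*} [CommSemiring R] {m : R⟦X⟧}

theorem coeff_add_two_of_eq_one_add_X_mul_add_X_sq_mul_sq
    (hm : m = 1 + X * m + X ^ 2 * m ^ 2) (n : ℕ) :
    coeff (n + 2) m = coeff (n + 1) m + ∑ ij ∈ antidiagonal n, coeff ij.1 m * coeff ij.2 m := by
  conv_lhs => rw [hm]
  rw [map_add, map_add, coeff_one, if_neg (by omega), coeff_succ_X_mul, coeff_X_pow_mul, sq,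
    coeff_mul, zero_add]

theorem coeff_eq_motzkin_of_eq_one_add_X_mul_add_X_sq_mul_sq
    (hm : m = 1 + X * m + X ^ 2 * m ^ 2) (n : ℕ) : coeff n m = motzkin n := by
  have h0 : coeff 0 m = 1 := by
    conv_lhs => rw [hm]
    simp
  induction n using Nat.strong_induction_on with
  | _ n ih =>
    match n with
    | 0 => rw [h0, motzkin_zero, Nat.cast_one]
    | 1 =>
      conv_lhs => rw [hm]
      simp [h0, motzkin_one, coeff_X_pow_mul']
    | n + 2 =>
      rw [coeff_add_two_of_eq_one_add_X_mul_add_X_sq_mul_sq hm, motzkin_add_two,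
        ih (n + 1) (by omega)]
      push_cast
      congr 1
      refine sum_congr rfl fun ij hij => ?_
      have := mem_antidiagonal.1 hij
      rw [ih ij.1 (by omega), ih ij.2 (by omega)]

end PowerSeries

/-- The `n`-th Motzkin number `M_n = Σ_{k=0}^{⌊n/2⌋} C(n,2k)·C_k` equals the coefficient of
`x^n` in `(1/x)·Rev(x/(1+x+x^2))`.  The reversion `r` is characterized by `r(0)=0` and
`f(r)=X`, i.e. `r = X·(1 + r + r^2)`. -/
theorem motzkin_eq_coeff_reversion
    (r : PowerSeries ℚ) (h0 : constantCoeff r = 0) (hr : r = X * (1 + r + r ^ 2)) :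
    ∀ n : ℕ, coeff (n + 1) r =
      ∑ k ∈ range (n / 2 + 1), (n.choose (2 * k) : ℚ) * catalan k := by
  intro n
  set m : ℚ⟦X⟧ := mk fun p => coeff (p + 1) r
  have hr_eq : r = X * m := by simpa [h0] using sub_const_eq_X_mul_shift r
  have hm : m = 1 + X * m + X ^ 2 * m ^ 2 := X_mul_cancel <| by
    calc X * m = r := hr_eq.symm
      _ = X * (1 + r + r ^ 2) := hr
      _ = X * (1 + X * m + X ^ 2 * m ^ 2) := by rw [hr_eq]; ring
  simpa [m, motzkin] using coeff_eq_motzkin_of_eq_one_add_X_mul_add_X_sq_mul_sq hm n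
end

section
/- For real parameters a, b with b ≠ 0 and y with 0 ≤ y < 1, the Sumudu transform of the function t ↦ (1 - y·e^{bt(1-y)})/((1-y)·e^{at(1-y)}), namely (1/x)·∫_0^∞ ((1 - y·e^{bt(1-y)})/((1-y)·e^{at(1-y)}))·e^{-t/x} dt, equals (1 - x(a(y-1)+b))/(1 + (1-y)(2a-b)x + a(a-b)(y-1)^2 x^2), for all sufficiently small x > 0 for which the integral converges. -/
/-!
Since `1 - y ≠ 0`, the function is the combination
`(1 - y)⁻¹ e^{-a(1-y)t} - y/(1 - y) · e^{(b-a)(1-y)t}` of two exponentials, and the Sumudu transform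
of `e^{ct}` is `1/(1 - cx)` as soon as `cx < 1`. The right-hand side is the resulting combination
of two such fractions over the common denominator `(1 + a(1-y)x)(1 + (a-b)(1-y)x)`.
-/

open Real MeasureTheory Set Filter Topology

noncomputable def sumudu (f : ℝ → ℝ) (x : ℝ) : ℝ :=
  (1 / x) * ∫ t in Ioi 0, f t * exp (-t / x)

lemma exp_mul_mul_exp_neg_div (c x t : ℝ) :
    exp (c * t) * exp (-t / x) = exp ((c - 1 / x) * t) := by
  rw [← exp_add]
  ring_nf

section Sumudu

variable {c x : ℝ}

lemma sub_one_div_neg (hx : 0 < x) (hcx : c * x < 1) : c - 1 / x < 0 := by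
  rwa [sub_neg, lt_div_iff₀ hx]

lemma integrableOn_exp_mul_mul_exp_neg_div (hx : 0 < x) (hcx : c * x < 1) :
    IntegrableOn (fun t => exp (c * t) * exp (-t / x)) (Ioi 0) := by
  simp only [exp_mul_mul_exp_neg_div]
  exact integrableOn_exp_mul_Ioi (sub_one_div_neg hx hcx) 0

lemma sumudu_exp_mul (hx : 0 < x) (hcx : c * x < 1) :
    sumudu (fun t => exp (c * t)) x = 1 / (1 - c * x) := by
  have h : 1 - c * x ≠ 0 := by linarith
  simp only [sumudu, exp_mul_mul_exp_neg_div,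
    integral_exp_mul_Ioi (sub_one_div_neg hx hcx), mul_zero, exp_zero]
  rw [show c - 1 / x = -((1 - c * x) / x) by field_simp; ring]
  field_simp

variable {d : ℝ}

lemma integrableOn_sub_exp_mul_mul_exp_neg_div (α β : ℝ) (hx : 0 < x) (hcx : c * x < 1)
    (hdx : d * x < 1) :
    IntegrableOn (fun t => (α * exp (c * t) - β * exp (d * t)) * exp (-t / x)) (Ioi 0) := by
  simp only [sub_mul, mul_assoc]
  exact ((integrableOn_exp_mul_mul_exp_neg_div hx hcx).const_mul α).sub
    ((integrableOn_exp_mul_mul_exp_neg_div hx hdx).const_mul β)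

lemma sumudu_sub_exp_mul (α β : ℝ) (hx : 0 < x) (hcx : c * x < 1) (hdx : d * x < 1) :
    sumudu (fun t => α * exp (c * t) - β * exp (d * t)) x
      = α / (1 - c * x) - β / (1 - d * x) := by
  have hc := sumudu_exp_mul hx hcx
  have hd := sumudu_exp_mul hx hdx
  simp only [sumudu] at hc hd ⊢
  simp only [sub_mul, mul_assoc]
  rw [integral_sub ((integrableOn_exp_mul_mul_exp_neg_div hx hcx).const_mul α)
      ((integrableOn_exp_mul_mul_exp_neg_div hx hdx).const_mul β),
    integral_const_mul, integral_const_mul, mul_sub, mul_left_comm, hc, mul_left_comm, hd]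
  ring

end Sumudu

lemma eventually_mul_lt_one (c : ℝ) : ∀ᶠ x in 𝓝 0, c * x < 1 :=
  ((continuous_const_mul c).tendsto' 0 0 (mul_zero c)).eventually_lt_const one_pos

lemma one_sub_mul_exp_div_mul_exp_eq {a b y : ℝ} (hy : 1 - y ≠ 0) (t : ℝ) :
    (1 - y * exp (b * t * (1 - y))) / ((1 - y) * exp (a * t * (1 - y)))
      = (1 - y)⁻¹ * exp (-(a * (1 - y)) * t) - y / (1 - y) * exp ((b - a) * (1 - y) * t) := by
  have hexp : exp ((b - a) * (1 - y) * t) = exp (b * t * (1 - y)) / exp (a * t * (1 - y)) := by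
    rw [← exp_sub]
    ring_nf
  rw [hexp, neg_mul, exp_neg, show a * (1 - y) * t = a * t * (1 - y) by ring]
  field_simp

theorem sumudu_of_inverse_eulerian_gf_general
    (a b y : ℝ) (hy1 : y < 1) :
    ∃ ε > 0, ∀ x : ℝ, 0 < x → x < ε →
      IntegrableOn
        (fun t : ℝ =>
          (1 - y * Real.exp (b * t * (1 - y))) / ((1 - y) * Real.exp (a * t * (1 - y)))
            * Real.exp (-t / x)) (Set.Ioi 0) ∧
      (1 / x) * ∫ t in Set.Ioi (0 : ℝ),
          (1 - y * Real.exp (b * t * (1 - y))) / ((1 - y) * Real.exp (a * t * (1 - y)))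
            * Real.exp (-t / x)
        = (1 - x * (a * (y - 1) + b)) /
            (1 + (1 - y) * (2 * a - b) * x + a * (a - b) * (y - 1) ^ 2 * x ^ 2) := by
  have hy : 1 - y ≠ 0 := by linarith
  obtain ⟨ε, hε, hsmall⟩ := Metric.eventually_nhds_iff.mp
    ((eventually_mul_lt_one (-(a * (1 - y)))).and (eventually_mul_lt_one ((b - a) * (1 - y))))
  refine ⟨ε, hε, fun x hx hxε => ?_⟩
  obtain ⟨hc, hd⟩ := hsmall (by rwa [dist_zero_right, norm_of_nonneg hx.le])
  simp only [one_sub_mul_exp_div_mul_exp_eq hy]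
  refine ⟨integrableOn_sub_exp_mul_mul_exp_neg_div _ _ hx hc hd,
    (sumudu_sub_exp_mul _ _ hx hc hd).trans ?_⟩
  have hc' : 1 - -(a * (1 - y)) * x ≠ 0 := by linarith
  have hd' : 1 - (b - a) * (1 - y) * x ≠ 0 := by linarith
  rw [show 1 + (1 - y) * (2 * a - b) * x + a * (a - b) * (y - 1) ^ 2 * x ^ 2
      = (1 - -(a * (1 - y)) * x) * (1 - (b - a) * (1 - y) * x) by ring, div_sub_div _ _ hc' hd']
  congr 1
  field_simp
  ring

/-- For real parameters `a`, `b ≠ 0`, `0 ≤ y < 1`, the Sumudu transform of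
`t ↦ (1 - y·e^{bt(1-y)})/((1-y)·e^{at(1-y)})` equals
`(1 - x(a(y-1)+b))/(1 + (1-y)(2a-b)x + a(a-b)(y-1)²x²)` for all sufficiently small `x > 0`. -/
theorem sumudu_of_inverse_eulerian_gf
    (a b y : ℝ) (hb : b ≠ 0) (hy0 : 0 ≤ y) (hy1 : y < 1) :
    ∃ ε > 0, ∀ x : ℝ, 0 < x → x < ε →
      IntegrableOn
        (fun t : ℝ =>
          (1 - y * Real.exp (b * t * (1 - y))) / ((1 - y) * Real.exp (a * t * (1 - y)))
            * Real.exp (-t / x)) (Set.Ioi 0) ∧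
      (1 / x) * ∫ t in Set.Ioi (0 : ℝ),
          (1 - y * Real.exp (b * t * (1 - y))) / ((1 - y) * Real.exp (a * t * (1 - y)))
            * Real.exp (-t / x)
        = (1 - x * (a * (y - 1) + b)) /
            (1 + (1 - y) * (2 * a - b) * x + a * (a - b) * (y - 1) ^ 2 * x ^ 2) :=
  sumudu_of_inverse_eulerian_gf_general a b y hy1
end

section
/- Specializing y = 1 in c(x(1+y-x(y-1)^2)) yields c(2x), whose coefficient of x^n equals 2^n·C_n, where C_n is the n-th Catalan number; hence the row sums of the transformed type-B Eulerian triangle are 2^n·C_n. -/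
open PowerSeries

/- The functional equation `w = 1 + a x w²` determines the coefficients of `w` recursively, and
the recursion it imposes, `[xⁿ⁺¹]w = a · ∑_{i+j=n} [xⁱ]w [xʲ]w`, is the Segner recurrence for
`aⁿ Cₙ` because the weights `aⁱ aʲ = aⁿ` do not depend on the split. At `y = 1` the argument
`x(1+y-x(y-1)²)` of `c` collapses to `2x`, so `a = 2`. -/

theorem PowerSeries.coeff_eq_pow_mul_catalan_of_eq_one_add_mul_sq {R : Type*} [CommSemiring R]
    (a : R) {w : R⟦X⟧} (hw : w = 1 + C a * X * w ^ 2) (n : ℕ) :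
    coeff n w = a ^ n * catalan n := by
  induction n using Nat.strong_induction_on with
  | _ n ih =>
    rcases n with _ | n
    · rw [hw]
      simp
    · have hconv : ∑ p ∈ Finset.HasAntidiagonal.antidiagonal n, coeff p.1 w * coeff p.2 w
          = a ^ n * catalan (n + 1) := by
        rw [catalan_succ', Nat.cast_sum, Finset.mul_sum]
        refine Finset.sum_congr rfl fun p hp => ?_
        rw [Finset.HasAntidiagonal.mem_antidiagonal] at hp
        rw [ih p.1 (by omega), ih p.2 (by omega), ← hp, Nat.cast_mul, pow_add]
        ring
      rw [hw, mul_comm (C a), mul_assoc, map_add, coeff_succ_X_mul, coeff_C_mul, sq, coeff_mul,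
        hconv, coeff_one, if_neg n.succ_ne_zero, zero_add, pow_succ]
      ring

/-- Specializing `y = 1` in `c(x(1+y-x(y-1)²))` yields `c(2x)`, whose `n`-th coefficient is
`2ⁿ·Cₙ`.  Here `w = c(x(1+y-x(y-1)²))` is the unique power series with `w = 1 + u·w²` for
`u = x(1+y-x(y-1)²)`; at `y = 1` the argument is `2x`, and `[xⁿ]w = 2ⁿ·catalan n`. -/
theorem transformed_typeB_row_sums
    (y : ℚ) (hy : y = 1)
    (w : PowerSeries ℚ)
    (hw : w = 1 + (X * (1 + C y - X * (C y - 1) ^ 2)) * w ^ 2) :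
    X * (1 + C y - X * (C y - 1) ^ 2) = 2 * X ∧
    ∀ n : ℕ, coeff n w = 2 ^ n * catalan n := by
  subst hy
  have harg : (X : ℚ⟦X⟧) * (1 + C 1 - X * (C 1 - 1) ^ 2) = 2 * X := by
    rw [map_one]
    ring
  rw [harg, ← map_ofNat C 2] at hw
  exact ⟨harg, coeff_eq_pow_mul_catalan_of_eq_one_add_mul_sq 2 hw⟩
end

section
/- The ordinary Riordan array ((1+λx+μx^2)/(1+αx+βx^2), x/(1+αx+βx^2)) has inverse whose first column has generating function μ(x) = 2β/((β-μ)·√(x^2(α^2-4β)-2αx+1) + x(2βλ-α(β+μ)) + β+μ), as formal power series identities. -/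
/-!
Writing `f = 1 + αr + βr²`, the reversion `r = X f` is the root of `βX r² + (αX - 1) r + X = 0`
vanishing at `0`, so the square root of the discriminant `(1 - αX)² - 4βX²` is the power series
`1 - αX - 2βXr`. Substituting it, the denominator collapses to `2β(1 + (λ-α)X - (β-μ)Xr)`, and
multiplying by `f` turns `X f` back into `r`, giving `2β(1 + λr + μr²)`; this is the claim after
multiplying it by the unit `1 + λr + μr²`.
-/

open PowerSeries

namespace PowerSeries

variable {R : Type*} [CommRing R]

theorem eq_of_sq_eq_sq_of_constantCoeff_eq_one (h2 : IsUnit (2 : R)) {s t : R⟦X⟧}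
    (hs : constantCoeff s = 1) (ht : constantCoeff t = 1) (h : s ^ 2 = t ^ 2) : s = t := by
  have hsum : IsUnit (s + t) := by
    rw [isUnit_iff_constantCoeff, map_add, hs, ht, one_add_one_eq_two]
    exact h2
  rw [← sub_eq_zero, ← hsum.mul_left_eq_zero]
  linear_combination h

theorem isUnit_one_add_C_mul_add_C_mul_sq {r : R⟦X⟧} (hr : constantCoeff r = 0) (a b : R) :
    IsUnit (1 + C a * r + C b * r ^ 2) := by
  simp [isUnit_iff_constantCoeff, hr]

end PowerSeries

section RiordanReversion

variable {R : Type*} [CommRing R] {α β : R} {r : R⟦X⟧}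

theorem constantCoeff_eq_zero_of_eq_X_mul (hr : r = X * (1 + C α * r + C β * r ^ 2)) :
    constantCoeff r = 0 := by
  rw [hr, map_mul, constantCoeff_X, zero_mul]

theorem sq_one_sub_C_mul_X_sub_C_mul_X_mul (hr : r = X * (1 + C α * r + C β * r ^ 2)) :
    (1 - C α * X - C (2 * β) * X * r) ^ 2 = C (α ^ 2 - 4 * β) * X ^ 2 - C (2 * α) * X + 1 := by
  simp only [map_sub, map_mul, map_pow, map_ofNat]
  linear_combination (-4 * C β * X) * hr

theorem eq_one_sub_C_mul_X_sub_C_mul_X_mul (h2 : IsUnit (2 : R))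
    (hr : r = X * (1 + C α * r + C β * r ^ 2)) {s : R⟦X⟧} (hs0 : constantCoeff s = 1)
    (hs : s ^ 2 = C (α ^ 2 - 4 * β) * X ^ 2 - C (2 * α) * X + 1) :
    s = 1 - C α * X - C (2 * β) * X * r :=
  eq_of_sq_eq_sq_of_constantCoeff_eq_one h2 hs0 (by simp)
    (hs.trans (sq_one_sub_C_mul_X_sub_C_mul_X_mul hr).symm)

theorem one_add_C_mul_add_C_mul_sq_mul_denominator (hr : r = X * (1 + C α * r + C β * r ^ 2))
    (lam mu : R) :
    (1 + C α * r + C β * r ^ 2) * (C (β - mu) * (1 - C α * X - C (2 * β) * X * r)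
        + C (2 * β * lam - α * (β + mu)) * X + C (β + mu))
      = C (2 * β) * (1 + C lam * r + C mu * r ^ 2) := by
  have hden : C (β - mu) * (1 - C α * X - C (2 * β) * X * r)
      + C (2 * β * lam - α * (β + mu)) * X + C (β + mu)
      = C (2 * β) * (1 + C (lam - α) * X - C (β - mu) * X * r) := by
    simp only [map_sub, map_add, map_mul, map_ofNat]
    ring
  rw [hden]
  simp only [map_sub, map_mul, map_ofNat]
  linear_combination (-2 * C β * (C lam - C α - (C β - C mu) * r)) * hr

end RiordanReversion

theorem riordan_inverse_first_column_gf_general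
    (α β lam mu : ℝ)
    (r : PowerSeries ℝ)
    (hr : r = X * (1 + C α * r + C β * r ^ 2))
    (m : PowerSeries ℝ)
    (hm : m * (1 + C lam * r + C mu * r ^ 2) = 1 + C α * r + C β * r ^ 2)
    (s : PowerSeries ℝ) (hs0 : constantCoeff s = 1)
    (hs : s ^ 2 = C (α ^ 2 - 4 * β) * X ^ 2 - C (2 * α) * X + 1) :
    m * (C (β - mu) * s + C (2 * β * lam - α * (β + mu)) * X + C (β + mu))
      = C (2 * β) := by
  rw [eq_one_sub_C_mul_X_sub_C_mul_X_mul (isUnit_of_invertible 2) hr hs0 hs]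
  refine (isUnit_one_add_C_mul_add_C_mul_sq (constantCoeff_eq_zero_of_eq_X_mul hr) lam mu)
    |>.mul_right_cancel ?_
  rw [mul_right_comm, hm, one_add_C_mul_add_C_mul_sq_mul_denominator hr, mul_comm]

/-- The first column of the inverse of the Riordan array
`((1+λx+μx²)/(1+αx+βx²), x/(1+αx+βx²))` has generating function
`m = 2β/((β-μ)·√(x²(α²-4β)-2αx+1) + x(2βλ-α(β+μ)) + β+μ)`.
Here `r = Rev f` is characterized by `r(0)=0` and `r = X(1+αr+βr²)`, the moment
generating function `m = 1/g(r)` by `m·(1+λr+μr²) = 1+αr+βr²`, and `s` is the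
power-series square root of `(α²-4β)x² - 2αx + 1` with constant term `1`. -/
theorem riordan_inverse_first_column_gf
    (α β lam mu : ℝ)
    (r : PowerSeries ℝ) (h0 : constantCoeff r = 0)
    (hr : r = X * (1 + C α * r + C β * r ^ 2))
    (m : PowerSeries ℝ)
    (hm : m * (1 + C lam * r + C mu * r ^ 2) = 1 + C α * r + C β * r ^ 2)
    (s : PowerSeries ℝ) (hs0 : constantCoeff s = 1)
    (hs : s ^ 2 = C (α ^ 2 - 4 * β) * X ^ 2 - C (2 * α) * X + 1) :
    m * (C (β - mu) * s + C (2 * β * lam - α * (β + mu)) * X + C (β + mu))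
      = C (2 * β) :=
  riordan_inverse_first_column_gf_general α β lam mu r hr m hm s hs0 hs
end

section
/- For the Riordan array ((1+λx)/(1+αx+βx^2), x/(1+αx+βx^2)) (the case μ = 0), the moment generating function μ(x) = 1/g(Rev f)(x) satisfies μ(x) = (1/(1-x(α-2λ)))·c( x(λ - x(αλ - β - λ^2))/(1-x(α-2λ))^2 ), where c is the Catalan generating function. -/
/-!
Write `S = 1 + αr + βr²` and `L = 1 + λr`, so that `r = XS` and `mL = S`. Multiplying the
claimed quadratic relation `m(1 - (α-2λ)X) = 1 + X(λ - X(αλ-β-λ²))m²` by `L²` and replacing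
`XS` by `r` turns it into a polynomial identity in `r`; since `L` is a unit it can be cancelled.
Hence `m(1 - (α-2λ)X)` solves the Catalan equation `w = 1 + uw²`, whose solution is unique
because `u` has no constant term: the difference of two solutions is killed by the unit
`1 - u(v + w)`.
-/

open PowerSeries

theorem moment_mul_one_sub_eq {A : Type*} [CommRing A] (a b l x r m : A)
    (hr : r = x * (1 + a * r + b * r ^ 2))
    (hm : m * (1 + l * r) = 1 + a * r + b * r ^ 2) (hL : IsUnit (1 + l * r)) :
    m * (1 - (a - 2 * l) * x) = 1 + x * (l - x * (a * l - b - l ^ 2)) * m ^ 2 := by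
  rw [← sub_eq_zero, ← (hL.pow 2).mul_left_eq_zero]
  linear_combination
    ((1 - (a - 2 * l) * x) * (1 + l * r)
        + (-(l * x) + (a * l - b - l ^ 2) * x ^ 2)
          * (m * (1 + l * r) + (1 + a * r + b * r ^ 2))) * hm
      - (-((a - 2 * l) * (1 + l * r)) - l * (1 + a * r + b * r ^ 2)
        + (a * l - b - l ^ 2) * (x * (1 + a * r + b * r ^ 2) + r)) * hr

theorem PowerSeries.eq_of_eq_one_add_mul_sq {R : Type*} [CommRing R] {u v w : R⟦X⟧}
    (hu : constantCoeff u = 0) (hv : v = 1 + u * v ^ 2) (hw : w = 1 + u * w ^ 2) :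
    v = w := by
  have hunit : IsUnit (1 - u * (v + w)) := by
    simp [isUnit_iff_constantCoeff, hu]
  rw [← sub_eq_zero, ← hunit.mul_right_eq_zero]
  linear_combination hv - hw

/-- For the Riordan array `((1+λx)/(1+αx+βx²), x/(1+αx+βx²))`, the moment generating
function `m = 1/g(Rev f)` satisfies
`m = (1/(1-x(α-2λ)))·c(x(λ - x(αλ-β-λ²))/(1-x(α-2λ))²)`.
Here `r = Rev f` satisfies `r(0)=0`, `r = X(1+αr+βr²)`; `m` satisfies
`m·(1+λr) = 1+αr+βr²`; the Catalan argument `u` is characterized by clearing denominators;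
and `c(u)` is the unique `w` with `w = 1 + u·w²`. -/
theorem moment_gf_eq_shifted_catalan
    (α β lam : ℝ)
    (r : PowerSeries ℝ) (h0 : constantCoeff r = 0)
    (hr : r = X * (1 + C α * r + C β * r ^ 2))
    (m : PowerSeries ℝ)
    (hm : m * (1 + C lam * r) = 1 + C α * r + C β * r ^ 2)
    (u : PowerSeries ℝ)
    (hu : u * (1 - C (α - 2 * lam) * X) ^ 2
        = X * (C lam - X * C (α * lam - β - lam ^ 2)))
    (w : PowerSeries ℝ) (hw : w = 1 + u * w ^ 2) :
    m * (1 - C (α - 2 * lam) * X) = w := by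
  have hL : IsUnit (1 + C lam * r) := by
    simp [isUnit_iff_constantCoeff, h0]
  have hu0 : constantCoeff u = 0 := by
    simpa using congrArg constantCoeff hu
  simp only [map_sub, map_mul, map_pow, map_ofNat] at hu ⊢
  have hquad := moment_mul_one_sub_eq _ _ _ _ _ _ hr hm hL
  refine eq_of_eq_one_add_mul_sq hu0 ?_ hw
  linear_combination hquad - m ^ 2 * hu
end

section
/- The moment sequence μ_n of the ordinary Riordan array ((1-αx)/(1+βx+γx^2), x/(1+βx+γx^2)) satisfies μ_n = [x^n] (1/x)·Rev( x(1+αx)/(1 + (β+2α)x + (α^2+αβ+γ)x^2) ), as an identity of formal power series coefficients. -/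
open PowerSeries

/-!
If `r = x(1 + βr + γr²)` is the reversion of `f` and `m(1 - αr) = 1 + βr + γr²`, then
`A = x·m` satisfies `A(1 - αr) = r`, so `r` is the Möbius transform `A/(1 + αA)` of `A`.
Substituting this into the equation for `r` and clearing the denominator `(1 + αA)²` shows that
`A` solves the defining equation of `ρ`, and that equation has only one solution without
constant term.
-/

namespace PowerSeries

variable {R : Type*} [CommRing R]

theorem eq_of_mul_one_add_eq_X_mul_quadratic {a b c : R} {ρ σ : R⟦X⟧}
    (hρ0 : constantCoeff ρ = 0) (hσ0 : constantCoeff σ = 0)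
    (hρ : ρ * (1 + C a * ρ) = X * (1 + C b * ρ + C c * ρ ^ 2))
    (hσ : σ * (1 + C a * σ) = X * (1 + C b * σ + C c * σ ^ 2)) :
    ρ = σ := by
  have hfactor : (ρ - σ) * (1 + C a * (ρ + σ) - X * C b - X * C c * (ρ + σ)) = 0 := by
    linear_combination hρ - hσ
  have hunit : IsUnit (1 + C a * (ρ + σ) - X * C b - X * C c * (ρ + σ)) := by
    rw [isUnit_iff_constantCoeff]
    simp [hρ0, hσ0]
  exact sub_eq_zero.mp (hunit.mul_left_eq_zero.mp hfactor)

theorem mul_one_add_eq_X_mul_quadratic_of_mul_one_sub_eq {a b c : R} {r A : R⟦X⟧}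
    (hr : r = X * (1 + C b * r + C c * r ^ 2)) (hA : A * (1 - C a * r) = r) :
    A * (1 + C a * A) = X * (1 + C (b + 2 * a) * A + C (a ^ 2 + a * b + c) * A ^ 2) := by
  have hA_eq : A = r * (1 + C a * A) := by linear_combination hA
  simp only [map_add, map_mul, map_pow, map_ofNat]
  linear_combination (1 + C a * A) ^ 2 * hr
    + (1 + C a * A - X * C b * (1 + C a * A) - X * C c * (A + r * (1 + C a * A))) * hA_eq

end PowerSeries

theorem moments_eq_reversion_coeffs_general
    (α β γ : ℝ)
    (r : PowerSeries ℝ)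
    (hr : r = X * (1 + C β * r + C γ * r ^ 2))
    (m : PowerSeries ℝ)
    (hm : m * (1 - C α * r) = 1 + C β * r + C γ * r ^ 2)
    (ρ : PowerSeries ℝ) (hρ0 : constantCoeff ρ = 0)
    (hρ : ρ * (1 + C α * ρ)
        = X * (1 + C (β + 2 * α) * ρ + C (α ^ 2 + α * β + γ) * ρ ^ 2)) :
    ∀ n : ℕ, coeff n m = coeff (n + 1) ρ := by
  have hXm : X * m * (1 - C α * r) = r := by rw [mul_assoc, hm, ← hr]
  have hρ_eq : ρ = X * m :=
    eq_of_mul_one_add_eq_X_mul_quadratic hρ0 (by simp) hρ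
      (mul_one_add_eq_X_mul_quadratic_of_mul_one_sub_eq hr hXm)
  intro n
  rw [hρ_eq, coeff_succ_X_mul]

/-- The moments `μₙ` of the Riordan array `((1-αx)/(1+βx+γx²), x/(1+βx+γx²))` satisfy
`μₙ = [xⁿ](1/x)·Rev(x(1+αx)/(1+(β+2α)x+(α²+αβ+γ)x²))`.
Here `r = Rev f` satisfies `r(0)=0`, `r = X(1+βr+γr²)`; the moment generating function
`m = 1/g(r)` satisfies `m·(1-αr) = 1+βr+γr²`; and `ρ` is the reversion of
`x(1+αx)/(1+(β+2α)x+(α²+αβ+γ)x²)`, characterized by `ρ(0)=0` and clearing denominators. -/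
theorem moments_eq_reversion_coeffs
    (α β γ : ℝ)
    (r : PowerSeries ℝ) (h0 : constantCoeff r = 0)
    (hr : r = X * (1 + C β * r + C γ * r ^ 2))
    (m : PowerSeries ℝ)
    (hm : m * (1 - C α * r) = 1 + C β * r + C γ * r ^ 2)
    (ρ : PowerSeries ℝ) (hρ0 : constantCoeff ρ = 0)
    (hρ : ρ * (1 + C α * ρ)
        = X * (1 + C (β + 2 * α) * ρ + C (α ^ 2 + α * β + γ) * ρ ^ 2)) :
    ∀ n : ℕ, coeff n m = coeff (n + 1) ρ :=
  moments_eq_reversion_coeffs_general α β γ r hr m hm ρ hρ0 hρ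
end

section
/- The moment generating function of the Riordan array ((1-αx)/(1+βx+γx^2), x/(1+βx+γx^2)) equals 2/(1 - (2α+β)x + √(1-2βx+(β^2-4γ)x^2)), as a formal power series identity. -/
/-!
Let `r = Rev f`, so `r = x (1 + β r + γ r²)`. Read as a quadratic in `r`, this equation has
discriminant `1 - 2βx + (β² - 4γ)x²`, whose square root with constant term `1` is therefore
`1 - βx - 2γxr`. Dividing `1 - αr` by `1 + βr + γr²` with the help of the same equation gives
`1 / m = 1 - x(α + β + γr)`, and `2 / m` is exactly `1 - (2α + β)x + (1 - βx - 2γxr)`.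
-/

open PowerSeries

section QuadraticRelation

variable {R : Type*} [CommRing R] {x r : R} (a b c : R)

theorem sq_eq_discrim_of_eq_mul_quadratic (hr : r = x * (1 + b * r + c * r ^ 2)) :
    (1 - b * x - 2 * c * x * r) ^ 2 = 1 - 2 * b * x + (b ^ 2 - 4 * c) * x ^ 2 := by
  have hquad : c * x * (r * r) + (b * x - 1) * r + x = 0 := by linear_combination -hr
  have hdiscrim := discrim_eq_sq_of_quadratic_eq_zero hquad
  rw [discrim] at hdiscrim
  linear_combination -hdiscrim

theorem one_sub_mul_mul_eq_of_eq_mul_quadratic (hr : r = x * (1 + b * r + c * r ^ 2)) :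
    (1 - x * (a + b + c * r)) * (1 + b * r + c * r ^ 2) = 1 - a * r := by
  linear_combination (a + b + c * r) * hr

end QuadraticRelation

namespace PowerSeries

variable {R : Type*} [CommRing R]

theorem eq_of_sq_eq_sq_of_constantCoeff_add_ne_zero [NoZeroDivisors R] {s t : R⟦X⟧}
    (hsq : s ^ 2 = t ^ 2) (hc : constantCoeff (s + t) ≠ 0) : s = t := by
  refine (sq_eq_sq_iff_eq_or_eq_neg.mp hsq).resolve_right fun hneg => hc ?_
  rw [hneg, neg_add_cancel, map_zero]

theorem isUnit_one_sub_mul_of_constantCoeff_eq_zero (a : R) {r : R⟦X⟧}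
    (h0 : constantCoeff r = 0) : IsUnit (1 - C a * r) :=
  isUnit_iff_constantCoeff.mpr (by simp [h0])

end PowerSeries

/-- Here `r = Rev f` is pinned down by `r(0) = 0` and `r = x (1 + βr + γr²)`, and the moment
generating function `m = 1 / g(r)` by `m (1 - αr) = 1 + βr + γr²`. -/
theorem moment_gf_closed_form
    (α β γ : ℝ)
    (r : PowerSeries ℝ) (h0 : constantCoeff r = 0)
    (hr : r = X * (1 + C β * r + C γ * r ^ 2))
    (m : PowerSeries ℝ)
    (hm : m * (1 - C α * r) = 1 + C β * r + C γ * r ^ 2)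
    (s : PowerSeries ℝ) (hs0 : constantCoeff s = 1)
    (hs : s ^ 2 = 1 - C (2 * β) * X + C (β ^ 2 - 4 * γ) * X ^ 2) :
    m * (1 - C (2 * α + β) * X + s) = 2 := by
  simp only [map_add, map_sub, map_mul, map_pow, map_ofNat] at hs ⊢
  have hsqrt : s = 1 - C β * X - 2 * C γ * X * r := by
    refine eq_of_sq_eq_sq_of_constantCoeff_add_ne_zero ?_ (by simp [hs0, h0])
    rw [hs, sq_eq_discrim_of_eq_mul_quadratic _ _ hr]
  have hinv : m * (1 - X * (C α + C β + C γ * r)) = 1 := by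
    refine (isUnit_one_sub_mul_of_constantCoeff_eq_zero α h0).mul_right_cancel ?_
    rw [one_mul, mul_right_comm, hm, mul_comm, one_sub_mul_mul_eq_of_eq_mul_quadratic _ _ _ hr]
  rw [hsqrt]
  linear_combination 2 * hinv
end

section
/- For the exponential Riordan array [ (1-y)e^{ax(1-y)}/(1 - y e^{bx(1-y)}), (e^{bx} - e^{bxy})/(b(e^{bxy} - y e^{bx})) ] with b ≠ 0 and y ≠ 1, the A-series and Z-series satisfy A(x) = f'(Rev f)(x) = (1+bx)(1+bxy) and Z(x) = g'(Rev f)(x)/g(Rev f)(x) = a(1-y) + by + b^2 y x. -/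
/-!
Put `c = b(1-y)` and `E = e^{cx}`. Since `e^{bx} = E·e^{bxy}`, the factor `e^{bxy}` cancels from
`f`, leaving `b f = (E - 1)/(1 - yE)`. Hence `1 + bf = (1-y)E/(1-yE)`, `1 + byf = (1-y)/(1-yE)`
and `(bf)' = c(1-y)E/(1-yE)² = b(1 + bf)(1 + byf)`, the A-series identity. The logarithmic
derivative of `g = (1-y)e^{a(1-y)x}/(1-yE)` is `a(1-y) + ycE/(1-yE) = a(1-y) + by(1 + bf)`,
the Z-series identity.
-/

open PowerSeries

namespace PowerSeries

theorem derivative_rescale {R : Type*} [CommSemiring R] (c : R) (f : R⟦X⟧) :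
    d⁄dX R (rescale c f) = C c * rescale c (d⁄dX R f) := by
  ext n
  simp only [coeff_derivative, coeff_rescale, coeff_C_mul, pow_succ]
  ring

section Exp

variable {A : Type*} [CommRing A] [Algebra ℚ A]

theorem derivative_rescale_exp (c : A) :
    d⁄dX A (rescale c (exp A)) = C c * rescale c (exp A) := by
  rw [derivative_rescale, derivative_exp]

theorem constantCoeff_rescale_exp (c : A) : constantCoeff (rescale c (exp A)) = 1 := by
  rw [← coeff_zero_eq_constantCoeff_apply, coeff_rescale, coeff_exp]
  simp

end Exp

end PowerSeries

section Eulerian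

variable {K : Type*} [Field K] [Algebra ℚ K]

noncomputable def eulerianSeries (c y : K) : K⟦X⟧ :=
  (rescale c (exp K) - 1) * (1 - C y * rescale c (exp K))⁻¹

theorem one_sub_C_mul_rescale_exp_mul_inv_cancel (c : K) {y : K} (hy : y ≠ 1) :
    (1 - C y * rescale c (exp K)) * (1 - C y * rescale c (exp K))⁻¹ = 1 := by
  apply PowerSeries.mul_inv_cancel
  simpa [constantCoeff_rescale_exp, sub_eq_zero] using hy.symm

theorem derivative_inv_one_sub_C_mul_rescale_exp (c y : K) :
    d⁄dX K (1 - C y * rescale c (exp K))⁻¹ =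
      C (y * c) * rescale c (exp K) * (1 - C y * rescale c (exp K))⁻¹ ^ 2 := by
  rw [derivative_inv', map_sub, derivative_one, Derivation.leibniz, derivative_C,
    derivative_rescale_exp, smul_zero, add_zero, smul_eq_mul, map_mul]
  ring

theorem derivative_mul_inv_one_sub_C_mul_rescale_exp (c y : K) (p : K⟦X⟧) :
    d⁄dX K (p * (1 - C y * rescale c (exp K))⁻¹) =
      d⁄dX K p * (1 - C y * rescale c (exp K))⁻¹ +
        C (y * c) * rescale c (exp K) * (1 - C y * rescale c (exp K))⁻¹ *
          (p * (1 - C y * rescale c (exp K))⁻¹) := by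
  rw [Derivation.leibniz, derivative_inv_one_sub_C_mul_rescale_exp, smul_eq_mul, smul_eq_mul]
  ring

theorem one_add_eulerianSeries {c y : K} (hy : y ≠ 1) :
    1 + eulerianSeries c y =
      C (1 - y) * rescale c (exp K) * (1 - C y * rescale c (exp K))⁻¹ := by
  rw [eulerianSeries, map_sub, map_one]
  linear_combination -one_sub_C_mul_rescale_exp_mul_inv_cancel c hy

theorem one_add_C_mul_eulerianSeries {c y : K} (hy : y ≠ 1) :
    1 + C y * eulerianSeries c y = C (1 - y) * (1 - C y * rescale c (exp K))⁻¹ := by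
  rw [eulerianSeries, map_sub, map_one]
  linear_combination -one_sub_C_mul_rescale_exp_mul_inv_cancel c hy

theorem derivative_eulerianSeries {c y : K} (hy : y ≠ 1) :
    d⁄dX K (eulerianSeries c y) =
      C (c * (1 - y)) * rescale c (exp K) * (1 - C y * rescale c (exp K))⁻¹ ^ 2 := by
  rw [eulerianSeries, derivative_mul_inv_one_sub_C_mul_rescale_exp, map_sub, derivative_one,
    derivative_rescale_exp, sub_zero, map_mul, map_mul, map_sub, map_one]
  linear_combination -(C c * rescale c (exp K) * (1 - C y * rescale c (exp K))⁻¹) *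
    one_sub_C_mul_rescale_exp_mul_inv_cancel c hy

theorem exp_quotient_eq_C_inv_mul_eulerianSeries (b y : K) :
    (rescale b (exp K) - rescale (b * y) (exp K)) *
        (C b * (rescale (b * y) (exp K) - C y * rescale b (exp K)))⁻¹ =
      C b⁻¹ * eulerianSeries (b * (1 - y)) y := by
  have hsplit : rescale b (exp K) = rescale (b * (1 - y)) (exp K) * rescale (b * y) (exp K) := by
    rw [exp_mul_exp_eq_exp_add]
    ring_nf
  have hden : C b * (rescale (b * y) (exp K) - C y * rescale b (exp K)) =
      rescale (b * y) (exp K) * (C b * (1 - C y * rescale (b * (1 - y)) (exp K))) := by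
    rw [hsplit]
    ring
  have hunit := PowerSeries.mul_inv_cancel (rescale (b * y) (exp K))
    ((constantCoeff_rescale_exp _).trans_ne one_ne_zero)
  rw [hden, PowerSeries.mul_inv_rev, PowerSeries.mul_inv_rev, C_inv, eulerianSeries, hsplit]
  linear_combination (C b⁻¹ * (rescale (b * (1 - y)) (exp K) - 1) *
    (1 - C y * rescale (b * (1 - y)) (exp K))⁻¹) * hunit

end Eulerian

-- Composing with `f`, the A- and Z-series identities read `A ∘ f = f'` and `(Z ∘ f) · g = g'`.
/-- For the exponential Riordan array with
`g(x) = (1-y)e^{ax(1-y)}/(1-y·e^{bx(1-y)})` and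
`f(x) = (e^{bx}-e^{bxy})/(b(e^{bxy}-y·e^{bx}))` (with `b ≠ 0`, `y ≠ 1`), the A-series and
Z-series are `A(x) = f'(Rev f)(x) = (1+bx)(1+bxy)` and
`Z(x) = g'(Rev f)(x)/g(Rev f)(x) = a(1-y)+by+b²yx`.  Since `Mathlib` lacks power-series
substitution, we state the equivalent composed identities `A(f(x)) = f'(x)` and
`Z(f(x))·g(x) = g'(x)`, where `A` and `Z` are polynomials in `f`. -/
theorem eulerian_exponential_riordan_A_and_Z
    (a b y : ℝ) (hb : b ≠ 0) (hy : y ≠ 1)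
    (g f : PowerSeries ℝ)
    (hg : g = C (1 - y) * rescale (a * (1 - y)) (exp ℝ) *
          (1 - C y * rescale (b * (1 - y)) (exp ℝ))⁻¹)
    (hf : f = (rescale b (exp ℝ) - rescale (b * y) (exp ℝ)) *
          (C b * (rescale (b * y) (exp ℝ) - C y * rescale b (exp ℝ)))⁻¹) :
    (1 + C b * f) * (1 + C (b * y) * f) = PowerSeries.derivative ℝ f ∧
    (C (a * (1 - y) + b * y) + C (b ^ 2 * y) * f) * g = PowerSeries.derivative ℝ g := by
  have hbf : C b * f = eulerianSeries (b * (1 - y)) y := by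
    rw [hf, exp_quotient_eq_C_inv_mul_eulerianSeries, ← mul_assoc, ← map_mul,
      mul_inv_cancel₀ hb, map_one, one_mul]
  have hbyf : C (b * y) * f = C y * eulerianSeries (b * (1 - y)) y := by
    rw [map_mul, mul_comm (C b), mul_assoc, hbf]
  constructor
  · have hder : C b * d⁄dX ℝ f = d⁄dX ℝ (eulerianSeries (b * (1 - y)) y) := by
      rw [← hbf, Derivation.leibniz, derivative_C, smul_zero, add_zero, smul_eq_mul]
    apply mul_left_cancel₀ ((map_ne_zero_iff C C_injective).mpr hb)
    rw [hder, derivative_eulerianSeries hy, hbf, hbyf, one_add_eulerianSeries hy,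
      one_add_C_mul_eulerianSeries hy]
    simp only [map_mul]
    ring
  · have hZ : C (a * (1 - y) + b * y) + C (b ^ 2 * y) * f =
        C (a * (1 - y)) + C (b * y) * (1 + C b * f) := by
      simp only [map_add, map_mul, map_pow]
      ring
    rw [hZ, hbf, one_add_eulerianSeries hy, hg, derivative_mul_inv_one_sub_C_mul_rescale_exp,
      Derivation.leibniz, derivative_C, smul_zero, add_zero, smul_eq_mul, derivative_rescale_exp]
    simp only [map_mul, map_sub, map_one]
    ring
end
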